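/- arXiv:2212.02862 — 4 statements merged into one kernel-verified Lean document; each statement's English description precedes it below -/
import Mathlib

section
/- Let (M̃, g̃, ∇̃, F) be a locally product-like statistical manifold of dimension m > 2 (with F ≠ ±I). If (M̃, g̃, ∇̃) is of constant curvature c̃, i.e., R̃(X,Y)Z = c̃{g̃(Y,Z)X − g̃(X,Z)Y}, then c̃ = 0. -/
open RealInnerProductSpace

/-- Pointwise model of a locally product-like statistical manifold of constant
curvature `c`: `F` is an almost product-like structure (an involution with metric
adjoint `Fs`, `F ≠ ±I`) and, since `∇̃F = 0`, constant curvature `c` forces the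
identity `c{g(Y,FZ)X − g(X,FZ)Y} = c{g(Y,Z)FX − g(X,Z)FY}`.  Then `c = 0`. -/
theorem stmt_3 {V : Type*} [NormedAddCommGroup V] [InnerProductSpace ℝ V]
    [FiniteDimensional ℝ V] (hdim : 2 < Module.finrank ℝ V)
    (F Fs : V →ₗ[ℝ] V)
    (hF : ∀ x, F (F x) = x)
    (hadj : ∀ x y, ⟪F x, y⟫ = ⟪x, Fs y⟫)
    (hF1 : F ≠ LinearMap.id) (hF2 : F ≠ -LinearMap.id)
    (c : ℝ)
    (hcurv : ∀ x y z : V,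
      c • (⟪y, F z⟫ • x - ⟪x, F z⟫ • y)
        = c • (⟪y, z⟫ • F x - ⟪x, z⟫ • F y)) :
    c = 0 := by
  by_contra hc
  have hE : ∀ x y z : V,
      ⟪y, F z⟫ • x - ⟪x, F z⟫ • y = ⟪y, z⟫ • F x - ⟪x, z⟫ • F y :=
    fun x y z => smul_right_injective V hc (hcurv x y z)
  -- there is a nonzero vector orthogonal to any two given vectors
  have hperp : ∀ x z : V, ∃ y : V, y ≠ 0 ∧ ⟪y, x⟫ = 0 ∧ ⟪y, z⟫ = 0 := by
    intro x z
    classical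
    set K := Submodule.span ℝ ({x, z} : Set V) with hK
    have hcard : Module.finrank ℝ K ≤ 2 := by
      have h1 := finrank_span_finset_le_card (R := ℝ) ({x, z} : Finset V)
      have h2 : (({x, z} : Finset V) : Set V) = ({x, z} : Set V) := by simp
      have h3 : ({x, z} : Finset V).card ≤ 2 := Finset.card_insert_le _ _
      rw [h2] at h1
      exact h1.trans h3
    have hsum := Submodule.finrank_add_finrank_orthogonal (K := K)
    have hpos : 0 < Module.finrank ℝ Kᗮ := by omega
    have hne : Kᗮ ≠ ⊥ := by
      intro h
      rw [h, finrank_bot] at hpos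
      exact lt_irrefl 0 hpos
    obtain ⟨y, hyK, hy0⟩ := Submodule.exists_mem_ne_zero_of_ne_bot hne
    have hx := (Submodule.mem_orthogonal K y).mp hyK x (Submodule.subset_span (by simp))
    have hz := (Submodule.mem_orthogonal K y).mp hyK z (Submodule.subset_span (by simp))
    rw [real_inner_comm] at hx hz
    exact ⟨y, hy0, hx, hz⟩
  -- key: F z is orthogonal to everything orthogonal to z
  have key : ∀ z x : V, ⟪x, z⟫ = 0 → ⟪x, F z⟫ = 0 := by
    intro z x hxz
    obtain ⟨y, hy0, hyx, hyz⟩ := hperp x z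
    have h := hE x y z
    rw [hyz, hxz, zero_smul, zero_smul, sub_zero] at h
    have h2 := congrArg (fun v => ⟪v, y⟫) h
    simp only [inner_sub_left, inner_smul_left, RCLike.ofReal_real_eq_id, id_eq,
      inner_zero_left, conj_trivial] at h2
    have hx_y : ⟪x, y⟫ = 0 := by rw [real_inner_comm]; exact hyx
    rw [hx_y] at h2
    have hyy : ⟪y, y⟫ ≠ 0 := fun h => hy0 (inner_self_eq_zero.mp h)
    have h3 : ⟪x, F z⟫ * ⟪y, y⟫ = 0 := by linarith
    rcases mul_eq_zero.mp h3 with h | h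
    · exact h
    · exact absurd h hyy
  -- every vector is an eigenvector of F
  have heig : ∀ z : V, ∃ a : ℝ, F z = a • z := by
    intro z
    have hmem : F z ∈ (Submodule.span ℝ ({z} : Set V))ᗮᗮ := by
      intro u hu
      have hu' : ⟪u, z⟫ = 0 := by
        rw [real_inner_comm]
        exact Submodule.mem_orthogonal_singleton_iff_inner_right.mp hu
      exact key z u hu'
    rw [Submodule.orthogonal_orthogonal] at hmem
    obtain ⟨a, ha⟩ := Submodule.mem_span_singleton.mp hmem
    exact ⟨a, ha.symm⟩
  -- eigenvalues are ±1
  have hpm : ∀ (z : V) (a : ℝ), z ≠ 0 → F z = a • z → a = 1 ∨ a = -1 := by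
    intro z a hz ha
    have h1 : F (F z) = (a * a) • z := by rw [ha, map_smul, ha, smul_smul]
    rw [hF] at h1
    have h2 : (a * a - 1) • z = 0 := by rw [sub_smul, one_smul, ← h1, sub_self]
    rcases smul_eq_zero.mp h2 with h | h
    · have : a * a = 1 := by linarith
      rcases mul_self_eq_one_iff.mp this with h' | h'
      · exact Or.inl h'
      · exact Or.inr h'
    · exact absurd h hz
  -- no mixed eigenvalues
  have hmix : ∀ z w : V, z ≠ 0 → w ≠ 0 → F z = z → F w = -w → False := by
    intro z w hz hw hFz hFw
    by_cases hzw : z + w = 0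
    · have hw' : w = -z := by linear_combination (norm := module) hzw
      have : F w = -z := by rw [hw', map_neg, hFz]
      rw [hFw, hw'] at this
      have hz0 : z = 0 := by linear_combination (norm := module) ((1:ℝ)/2 : ℝ) • this
      exact hz hz0
    · obtain ⟨a, ha⟩ := heig (z + w)
      have ha' : z + -w = a • z + a • w := by
        rw [← smul_add, ← ha, map_add, hFz, hFw]
      rcases hpm (z + w) a hzw ha with h | h
      · subst h
        have : w = 0 := by linear_combination (norm := module) (-(1:ℝ)/2 : ℝ) • ha'
        exact hw this
      · subst h
        have : z = 0 := by linear_combination (norm := module) ((1:ℝ)/2 : ℝ) • ha'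
        exact hz this
  by_cases hex : ∃ w : V, w ≠ 0 ∧ F w = -w
  · obtain ⟨w, hw0, hFw⟩ := hex
    apply hF2
    ext z
    simp only [LinearMap.neg_apply, LinearMap.id_coe, id_eq]
    by_cases hz : z = 0
    · simp [hz]
    · obtain ⟨a, ha⟩ := heig z
      rcases hpm z a hz ha with h | h
      · subst h
        rw [one_smul] at ha
        exact absurd (hmix z w hz hw0 ha hFw) not_false
      · subst h
        rw [ha]
        module
  · apply hF1
    ext z
    simp only [LinearMap.id_coe, id_eq]
    by_cases hz : z = 0
    · simp [hz]
    · obtain ⟨a, ha⟩ := heig z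
      rcases hpm z a hz ha with h | h
      · subst h; rw [ha, one_smul]
      · subst h
        exact absurd ⟨z, hz, by rw [ha]; module⟩ hex
end

section
/- Let M be a tangential hypersurface of an almost product-like Riemannian manifold with induced structures (φ, φ*, ξ, ξ*, η, η*). Then g(φX, Y) = g(X, φ*Y) and g(φX, φ*Y) = g(X,Y) − η*(X)η(Y) for all tangent X, Y; i.e., every tangential hypersurface carries a para contact-like metric structure. -/
open RealInnerProductSpace

/-- The tangential part `φX` of `FX` along a tangential hypersurface with unit
normal `N`. -/
noncomputable def phiMap {W : Type*} [NormedAddCommGroup W] [InnerProductSpace ℝ W]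
    (F : W →ₗ[ℝ] W) (N : W) (x : W) : W :=
  F x - ⟪F x, N⟫ • N

/-- Pointwise model of a tangential hypersurface: with `φ`, `φ*` the tangential
parts of `F`, `Fs` and `η*(X) = ⟪F X, N⟫`, `η(Y) = ⟪Fs Y, N⟫`, one has
`g(φX, Y) = g(X, φ*Y)` and `g(φX, φ*Y) = g(X,Y) - η*(X)η(Y)` for tangent `X, Y`;
i.e. every tangential hypersurface carries a para contact-like metric structure. -/
theorem stmt_15 {W : Type*} [NormedAddCommGroup W] [InnerProductSpace ℝ W]
    (F Fs : W →ₗ[ℝ] W)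
    (hF : ∀ x, F (F x) = x) (hFs : ∀ x, Fs (Fs x) = x)
    (hadj : ∀ x y, ⟪F x, y⟫ = ⟪x, Fs y⟫)
    (N : W) (hN : ‖N‖ = 1)
    (hξ : ⟪F N, N⟫ = 0) (hξs : ⟪Fs N, N⟫ = 0) :
    ∀ x y : W, ⟪x, N⟫ = 0 → ⟪y, N⟫ = 0 →
      ⟪phiMap F N x, y⟫ = ⟪x, phiMap Fs N y⟫
      ∧ ⟪phiMap F N x, phiMap Fs N y⟫
          = ⟪x, y⟫ - ⟪F x, N⟫ * ⟪Fs y, N⟫ := by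
  intro x y hx hy
  have hNN : ⟪N, N⟫ = (1:ℝ) := by
    rw [real_inner_self_eq_norm_sq, hN]; norm_num
  have hxN : ⟪N, x⟫ = 0 := by rw [real_inner_comm]; exact hx
  have hyN : ⟪N, y⟫ = 0 := by rw [real_inner_comm]; exact hy
  have hFFs : ⟪F x, Fs y⟫ = ⟪x, y⟫ := by rw [hadj, hFs]
  have hc : ⟪N, Fs y⟫ = ⟪Fs y, N⟫ := real_inner_comm _ _
  constructor
  · simp [phiMap, inner_sub_left, inner_sub_right, real_inner_smul_left,
      real_inner_smul_right, hyN, hxN, hx, hadj]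
  · simp only [phiMap, inner_sub_left, inner_sub_right, real_inner_smul_left,
      real_inner_smul_right, hNN, hFFs, hc]
    ring
end

section
/- Let M be a tangential hypersurface of a locally product-like statistical manifold with unit normal N, shape operators A_N, A*_N, and structures (φ, ξ, η, η*). Then η(A*_N X) + η*(A_N X) = 0 for all tangent X, and A_N ξ* + A*_N ξ = 0. -/
/-- Algebraic model of a tangential hypersurface of a locally product-like
statistical manifold: `E` is the module of ambient vector fields along `M` over
the ring of functions `A`, `g` the (symmetric) ambient metric, `Tm` the submodule
of tangent fields, `N` the unit normal, `F`, `Fs` the mutually adjoint product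
structures with `ξ = F N`, `ξ* = Fs N` tangent, `Db` the ambient connection with
Gauss formula `∇̃_X Y = ∇_X Y + g(A*_N X, Y) N` and Weingarten formula
`∇̃_X N = -A_N X + κ(X) N`, and `F` parallel (`∇̃F = 0`).  With the shape
operators self-adjoint and the induced metric nondegenerate on `Tm`, one gets
`η(A*_N X) + η*(A_N X) = 0` for all tangent `X`, and `A_N ξ* + A*_N ξ = 0`. -/
theorem stmt_16 {A : Type*} [CommRing A] {E : Type*} [AddCommGroup E] [Module A E]
    (g : E →ₗ[A] E →ₗ[A] A) (hgsymm : ∀ x y, g x y = g y x)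
    (Tm : Submodule A E) (N : E)
    (hNN : g N N = 1) (horth : ∀ y ∈ Tm, g y N = 0)
    (F Fs : E →ₗ[A] E)
    (hF : ∀ x, F (F x) = x) (hFsinv : ∀ x, Fs (Fs x) = x)
    (hadj : ∀ x y, g (F x) y = g x (Fs y))
    (hξ : F N ∈ Tm) (hξs : Fs N ∈ Tm)
    (Db : E → E → E) (nab : E → E → E) (AN ANs : E → E) (κ : E → A)
    (hGauss : ∀ x ∈ Tm, ∀ y ∈ Tm, Db x y = nab x y + g (ANs x) y • N)
    (hnabT : ∀ x ∈ Tm, ∀ y ∈ Tm, nab x y ∈ Tm)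
    (hWein : ∀ x ∈ Tm, Db x N = -(AN x) + κ x • N)
    (hANT : ∀ x ∈ Tm, AN x ∈ Tm) (hANsT : ∀ x ∈ Tm, ANs x ∈ Tm)
    (hpar : ∀ x ∈ Tm, ∀ e : E, Db x (F e) = F (Db x e))
    (hsaN : ∀ x ∈ Tm, ∀ y ∈ Tm, g (AN x) y = g x (AN y))
    (hsaNs : ∀ x ∈ Tm, ∀ y ∈ Tm, g (ANs x) y = g x (ANs y))
    (hnondeg : ∀ v ∈ Tm, (∀ x ∈ Tm, g x v = 0) → v = 0) :
    (∀ x ∈ Tm, g (ANs x) (F N) + g (AN x) (Fs N) = 0)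
    ∧ AN (Fs N) + ANs (F N) = 0 := by
  have key : ∀ x ∈ Tm, g (ANs x) (F N) + g (AN x) (Fs N) = 0 := by
    intro x hx
    have h1 : Db x (F N) = nab x (F N) + g (ANs x) (F N) • N := hGauss x hx (F N) hξ
    have h2 : Db x (F N) = -(F (AN x)) + κ x • F N := by
      rw [hpar x hx N, hWein x hx]; simp
    have e : nab x (F N) + g (ANs x) (F N) • N = -(F (AN x)) + κ x • F N := by
      rw [← h1, h2]
    have := congrArg (fun v => g v N) e
    simp only [map_add, map_neg, map_smul, LinearMap.add_apply, LinearMap.neg_apply,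
      LinearMap.smul_apply, smul_eq_mul] at this
    rw [horth _ (hnabT x hx (F N) hξ), hNN, hadj, hadj,
      hgsymm N (Fs N), horth _ hξs] at this
    linear_combination this
  refine ⟨key, ?_⟩
  refine hnondeg _ (Submodule.add_mem _ (hANT _ hξs) (hANsT _ hξ)) (fun x hx => ?_)
  rw [map_add, ← hsaN x hx (Fs N) hξs, ← hsaNs x hx (F N) hξ]
  linear_combination key x hx
end

section
/- Let M be a tangential hypersurface of a locally product-like statistical manifold. Then ∇_X ξ = −φ(A_N X) + κ(X)ξ and ∇*_X ξ* = −φ*(A*_N X) − κ(X)ξ* for all tangent X; in particular κ(X) = η*(∇_X ξ) = −η(∇*_X ξ*). -/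
/-- Algebraic model of a tangential hypersurface of a locally product-like
statistical manifold: with ambient dual connections `Db`, `Dbs`, induced dual
connections `nab`, `nabs`, Gauss formulas `∇̃_X Y = ∇_X Y + g(A*_N X,Y) N`,
`∇̃*_X Y = ∇*_X Y + g(A_N X,Y) N`, Weingarten formulas
`∇̃_X N = -A_N X + κ(X) N`, `∇̃*_X N = -A*_N X - κ(X) N`, and `∇̃F = 0`,
`∇̃*F* = 0`, one has (with `ξ = F N`, `ξ* = Fs N`, `φY = FY - g(FY,N)N`,
`φ*Y = F*Y - g(F*Y,N)N`, `η*(Y) = g(Y, ξ*)`, `η(Y) = g(Y, ξ)`):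
`∇_X ξ = -φ(A_N X) + κ(X)ξ`, `∇*_X ξ* = -φ*(A*_N X) - κ(X)ξ*`, and
`κ(X) = η*(∇_X ξ) = -η(∇*_X ξ*)`. -/
theorem stmt_17 {A : Type*} [CommRing A] {E : Type*} [AddCommGroup E] [Module A E]
    (g : E →ₗ[A] E →ₗ[A] A) (hgsymm : ∀ x y, g x y = g y x)
    (Tm : Submodule A E) (N : E)
    (hNN : g N N = 1) (horth : ∀ y ∈ Tm, g y N = 0)
    (F Fs : E →ₗ[A] E)
    (hF : ∀ x, F (F x) = x) (hFsinv : ∀ x, Fs (Fs x) = x)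
    (hadj : ∀ x y, g (F x) y = g x (Fs y))
    (hξ : F N ∈ Tm) (hξs : Fs N ∈ Tm)
    (Db Dbs : E → E → E) (nab nabs : E → E → E) (AN ANs : E → E) (κ : E → A)
    (hGauss : ∀ x ∈ Tm, ∀ y ∈ Tm, Db x y = nab x y + g (ANs x) y • N)
    (hGauss' : ∀ x ∈ Tm, ∀ y ∈ Tm, Dbs x y = nabs x y + g (AN x) y • N)
    (hnabT : ∀ x ∈ Tm, ∀ y ∈ Tm, nab x y ∈ Tm)
    (hnabsT : ∀ x ∈ Tm, ∀ y ∈ Tm, nabs x y ∈ Tm)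
    (hWein : ∀ x ∈ Tm, Db x N = -(AN x) + κ x • N)
    (hWein' : ∀ x ∈ Tm, Dbs x N = -(ANs x) - κ x • N)
    (hANT : ∀ x ∈ Tm, AN x ∈ Tm) (hANsT : ∀ x ∈ Tm, ANs x ∈ Tm)
    (hpar : ∀ x ∈ Tm, ∀ e : E, Db x (F e) = F (Db x e))
    (hpars : ∀ x ∈ Tm, ∀ e : E, Dbs x (Fs e) = Fs (Dbs x e)) :
    ∀ x ∈ Tm,
      nab x (F N) = -(F (AN x) - g (F (AN x)) N • N) + κ x • (F N)
      ∧ nabs x (Fs N) = -(Fs (ANs x) - g (Fs (ANs x)) N • N) - κ x • (Fs N)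
      ∧ κ x = g (nab x (F N)) (Fs N)
      ∧ κ x = - g (nabs x (Fs N)) (F N) := by

  intro x hx
  have hadj' : ∀ a b, g (Fs a) b = g a (F b) := by
    intro a b
    rw [hgsymm, ← hadj, hgsymm]
  have hFN0 : g (F N) N = 0 := horth _ hξ
  have hFsN0 : g (Fs N) N = 0 := horth _ hξs
  have hANx0 : g (AN x) N = 0 := horth _ (hANT x hx)
  have hANsx0 : g (ANs x) N = 0 := horth _ (hANsT x hx)
  -- primal side
  have h1 : Db x (F N) = -(F (AN x)) + κ x • F N := by
    rw [hpar x hx N, hWein x hx, map_add, map_neg, map_smul]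
  have h2 : nab x (F N) = -(F (AN x)) + κ x • F N - g (ANs x) (F N) • N := by
    have h := hGauss x hx (F N) hξ
    rw [h1] at h
    exact eq_sub_of_add_eq h.symm
  have hc : g (ANs x) (F N) = - g (F (AN x)) N := by
    have ht : g (nab x (F N)) N = 0 := horth _ (hnabT x hx (F N) hξ)
    rw [h2] at ht
    simp only [map_sub, map_add, map_neg, map_smul, LinearMap.sub_apply,
      LinearMap.add_apply, LinearMap.neg_apply, LinearMap.smul_apply,
      smul_eq_mul, hNN, hFN0, mul_one, mul_zero] at ht
    linear_combination -ht
  have hprim : nab x (F N) = -(F (AN x) - g (F (AN x)) N • N) + κ x • (F N) := by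
    rw [h2, hc]; module
  -- dual side
  have h1' : Dbs x (Fs N) = -(Fs (ANs x)) - κ x • Fs N := by
    rw [hpars x hx N, hWein' x hx, map_sub, map_neg, map_smul]
  have h2' : nabs x (Fs N) = -(Fs (ANs x)) - κ x • Fs N - g (AN x) (Fs N) • N := by
    have h := hGauss' x hx (Fs N) hξs
    rw [h1'] at h
    exact eq_sub_of_add_eq h.symm
  have hc' : g (AN x) (Fs N) = - g (Fs (ANs x)) N := by
    have ht : g (nabs x (Fs N)) N = 0 := horth _ (hnabsT x hx (Fs N) hξs)
    rw [h2'] at ht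
    simp only [map_sub, map_add, map_neg, map_smul, LinearMap.sub_apply,
      LinearMap.add_apply, LinearMap.neg_apply, LinearMap.smul_apply,
      smul_eq_mul, hNN, hFsN0, mul_one, mul_zero] at ht
    linear_combination -ht
  have hdual : nabs x (Fs N) = -(Fs (ANs x) - g (Fs (ANs x)) N • N) - κ x • (Fs N) := by
    rw [h2', hc']; module
  refine ⟨hprim, hdual, ?_, ?_⟩
  · have e1 : g (F (AN x)) (Fs N) = 0 := by rw [hadj, hFsinv]; exact hANx0
    have e2 : g N (Fs N) = 0 := by rw [hgsymm]; exact hFsN0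
    have e3 : g (F N) (Fs N) = 1 := by rw [hadj, hFsinv]; exact hNN
    rw [hprim]
    simp only [map_sub, map_add, map_neg, map_smul, LinearMap.sub_apply,
      LinearMap.add_apply, LinearMap.neg_apply, LinearMap.smul_apply,
      smul_eq_mul, e1, e2, e3, mul_one, mul_zero]
    ring
  · have e1 : g (Fs (ANs x)) (F N) = 0 := by rw [hadj', hF]; exact hANsx0
    have e2 : g N (F N) = 0 := by rw [hgsymm]; exact hFN0
    have e3 : g (Fs N) (F N) = 1 := by rw [hadj', hF]; exact hNN
    rw [hdual]
    simp only [map_sub, map_add, map_neg, map_smul, LinearMap.sub_apply,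
      LinearMap.add_apply, LinearMap.neg_apply, LinearMap.smul_apply,
      smul_eq_mul, e1, e2, e3, mul_one, mul_zero]
    ring
end
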